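/- Let θ₁ < θ₂ be real numbers and let h : [θ₁, θ₂] → ℝ be integrable. For λ ∈ ℂ \ ({0} ∪ {e^{iθ} : θ ∈ [θ₁, θ₂]}) define δ(λ) = exp( (1/(2π)) ∫_{θ₁}^{θ₂} h(θ)·e^{iθ}/(e^{iθ} − λ) dθ ). Then for every such λ one has δ(λ) · conj( δ(1/conj(λ)) ) = exp( (1/(2π)) ∫_{θ₁}^{θ₂} h(θ) dθ ) = δ(0), where δ(0) denotes exp of the average of h; i.e., the exponential Cauchy integral of a real density on an arc of the unit circle satisfies the symmetry δ(1/conj(λ)) = δ(0)·conj(δ(λ))^{−1}. -/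

import Mathlib

open MeasureTheory intervalIntegral Complex

lemma intervalIntegral_conj' {f : ℝ → ℂ} {a b : ℝ} :
    ∫ θ in a..b, (starRingEnd ℂ) (f θ) = (starRingEnd ℂ) (∫ θ in a..b, f θ) := by
  simp [intervalIntegral, ← integral_conj, map_sub]

lemma integ_aux (θ₁ θ₂ : ℝ) (h : ℝ → ℝ)
    (hint : IntervalIntegrable h MeasureTheory.volume θ₁ θ₂) (lam : ℂ)
    (hoff : ∀ θ ∈ Set.uIcc θ₁ θ₂, Complex.exp (Complex.I * θ) - lam ≠ 0) :
    IntervalIntegrable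
      (fun θ => (h θ : ℂ) * Complex.exp (Complex.I * θ) / (Complex.exp (Complex.I * θ) - lam))
      MeasureTheory.volume θ₁ θ₂ := by
  have h1 : IntervalIntegrable (fun θ => (h θ : ℂ)) MeasureTheory.volume θ₁ θ₂ :=
    ⟨hint.1.ofReal, hint.2.ofReal⟩
  have hg : ContinuousOn
      (fun θ : ℝ => Complex.exp (Complex.I * θ) / (Complex.exp (Complex.I * θ) - lam))
      (Set.uIcc θ₁ θ₂) := by
    apply ContinuousOn.div
    · fun_prop
    · fun_prop
    · exact hoff
  have := h1.mul_continuousOn hg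
  simpa [mul_div_assoc] using this

/-- The exponential Cauchy integral of a real density `h` on the arc
`{e^{iθ} : θ ∈ [θ₁,θ₂]}` of the unit circle,
`δ(λ) = exp((1/2π) ∫ h(θ) e^{iθ}/(e^{iθ} − λ) dθ)`. -/
noncomputable def deltaFun (θ₁ θ₂ : ℝ) (h : ℝ → ℝ) (lam : ℂ) : ℂ :=
  Complex.exp ((1 / (2 * (Real.pi : ℂ))) *
    ∫ θ in θ₁..θ₂,
      (h θ : ℂ) * Complex.exp (Complex.I * θ) / (Complex.exp (Complex.I * θ) - lam))

/-- Symmetry of the exponential Cauchy integral of a real density on an arc of the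
unit circle: `δ(λ)·conj(δ(1/conj λ)) = exp((1/2π)∫ h) = δ(0)`. -/
theorem delta_symmetry
    (θ₁ θ₂ : ℝ) (hθ : θ₁ < θ₂) (h : ℝ → ℝ)
    (hint : IntervalIntegrable h MeasureTheory.volume θ₁ θ₂)
    (lam : ℂ) (hlam0 : lam ≠ 0)
    (hoff : ∀ θ ∈ Set.Icc θ₁ θ₂, lam ≠ Complex.exp (Complex.I * θ)) :
    deltaFun θ₁ θ₂ h lam *
        (starRingEnd ℂ) (deltaFun θ₁ θ₂ h ((starRingEnd ℂ) lam)⁻¹) =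
      Complex.exp ((1 / (2 * (Real.pi : ℂ))) * ∫ θ in θ₁..θ₂, (h θ : ℂ)) ∧
    Complex.exp ((1 / (2 * (Real.pi : ℂ))) * ∫ θ in θ₁..θ₂, (h θ : ℂ)) =
      deltaFun θ₁ θ₂ h 0 := by
  have huIcc : Set.uIcc θ₁ θ₂ = Set.Icc θ₁ θ₂ := Set.uIcc_of_le hθ.le
  set μ : ℂ := ((starRingEnd ℂ) lam)⁻¹ with hμ
  have hμ0 : μ ≠ 0 := by
    simp [hμ, hlam0]
  -- exp(Iθ) is nonzero and its conj is its inverse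
  have hexpconj : ∀ θ : ℝ, (starRingEnd ℂ) (Complex.exp (Complex.I * θ)) =
      (Complex.exp (Complex.I * θ))⁻¹ := by
    intro θ
    rw [← Complex.exp_conj, ← Complex.exp_neg]
    congr 1
    simp [Complex.ext_iff]
  have hoffμ : ∀ θ ∈ Set.uIcc θ₁ θ₂, Complex.exp (Complex.I * θ) - μ ≠ 0 := by
    intro θ hθm heq
    rw [huIcc] at hθm
    apply hoff θ hθm
    have hz : Complex.exp (Complex.I * θ) = μ := by linear_combination heq
    have : (starRingEnd ℂ) lam = (Complex.exp (Complex.I * θ))⁻¹ := by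
      rw [hz, hμ]; simp
    have := congrArg (starRingEnd ℂ) this
    rw [Complex.conj_conj, map_inv₀, hexpconj, inv_inv] at this
    exact this
  have hoffL : ∀ θ ∈ Set.uIcc θ₁ θ₂, Complex.exp (Complex.I * θ) - lam ≠ 0 := by
    intro θ hθm heq
    rw [huIcc] at hθm
    exact hoff θ hθm (by linear_combination -heq)
  have hoff0 : ∀ θ ∈ Set.uIcc θ₁ θ₂, Complex.exp (Complex.I * θ) - 0 ≠ 0 := by
    intro θ _
    simpa using Complex.exp_ne_zero (Complex.I * θ)
  have hI1 := integ_aux θ₁ θ₂ h hint lam hoffL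
  have hI2 := integ_aux θ₁ θ₂ h hint μ hoffμ
  have hI2c : IntervalIntegrable
      (fun θ => (starRingEnd ℂ)
        ((h θ : ℂ) * Complex.exp (Complex.I * θ) / (Complex.exp (Complex.I * θ) - μ)))
      MeasureTheory.volume θ₁ θ₂ := by
    refine ⟨?_, ?_⟩
    · simpa [Function.comp, IntegrableOn] using
        Complex.conjCLE.toContinuousLinearMap.integrable_comp hI2.1
    · simpa [Function.comp, IntegrableOn] using
        Complex.conjCLE.toContinuousLinearMap.integrable_comp hI2.2
  have hc : (starRingEnd ℂ) (1 / (2 * (Real.pi : ℂ))) = 1 / (2 * (Real.pi : ℂ)) := by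
    rw [map_div₀, map_one, map_mul, Complex.conj_ofReal, map_ofNat]
  constructor
  · rw [deltaFun, deltaFun, ← Complex.exp_conj, ← Complex.exp_add, map_mul, hc,
      ← intervalIntegral_conj', ← mul_add,
      ← intervalIntegral.integral_add hI1 hI2c]
    congr 1
    congr 1
    apply intervalIntegral.integral_congr
    intro θ hθm
    have hz0 : Complex.exp (Complex.I * θ) ≠ 0 := Complex.exp_ne_zero _
    have hzL : Complex.exp (Complex.I * θ) - lam ≠ 0 := hoffL θ hθm
    have hzμ : Complex.exp (Complex.I * θ) - μ ≠ 0 := hoffμ θ hθm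
    set z := Complex.exp (Complex.I * θ) with hzdef
    have hconjz : (starRingEnd ℂ) z = z⁻¹ := hexpconj θ
    show (h θ : ℂ) * z / (z - lam) + (starRingEnd ℂ) ((h θ : ℂ) * z / (z - μ)) = (h θ : ℂ)
    have hconjμ : (starRingEnd ℂ) μ = lam⁻¹ := by
      rw [hμ, map_inv₀, Complex.conj_conj]
    have hinvne : z⁻¹ - lam⁻¹ ≠ 0 := by
      rw [← hconjz, ← hconjμ, ← map_sub]
      intro hh
      exact hzμ (by simpa using congrArg (starRingEnd ℂ) hh)
    have hlz : lam - z ≠ 0 := fun hh => hzL (by linear_combination -hh)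
    have h2 : z * lam - z ^ 2 ≠ 0 := by
      intro hh
      exact mul_ne_zero hz0 hlz (by linear_combination hh)
    rw [map_div₀, map_mul, Complex.conj_ofReal, map_sub, hconjz, hconjμ]
    field_simp
    ring
  · rw [deltaFun]
    congr 1
    congr 1
    apply intervalIntegral.integral_congr
    intro θ hθm
    have hz0 : Complex.exp (Complex.I * θ) ≠ 0 := Complex.exp_ne_zero _
    field_simp
    simp
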